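/- Let m ≥ 1 and let A : ℝ^m → ℝ^n be a linear map with operator norm ‖A‖ (its largest singular value), and let E be uniformly distributed on the unit sphere S^{m−1} ⊂ ℝ^m. Then (1/m)·‖A‖ ≤ E[‖AE‖₂], i.e. the worst-case condition of A is at most m times its stochastic condition. -/

import Mathlib

/-!
By isometry invariance, the law of `⟪v, E⟫` depends only on `‖v‖` (a reflection carries any
vector to any other of the same norm). Summing `⟪bᵢ, E⟫²` over an orthonormal basis gives
`‖E‖² = 1`, so `m 𝔼⟪v, E⟫² = ‖v‖²`, and since `|⟪v, E⟫| ≤ ‖v‖` this yields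
`‖v‖ ≤ m 𝔼|⟪v, E⟫|`. Applying it to `v = A† u` and using `|⟪A† u, E⟫| = |⟪u, A E⟫| ≤ ‖u‖ ‖A E‖`
bounds `‖A‖ = ‖A†‖` by `m 𝔼‖A E‖`.
-/

open Module
open scoped RealInnerProductSpace

namespace MeasureTheory

variable {V : Type*} [NormedAddCommGroup V] [InnerProductSpace ℝ V]
  [MeasurableSpace V] [BorelSpace V]

def Measure.IsIsometryInvariant (μ : Measure V) : Prop :=
  ∀ g : V ≃ₗᵢ[ℝ] V, μ.map g = μ

namespace Measure.IsIsometryInvariant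

variable {μ : Measure V}

theorem integral_comp {G : Type*} [NormedAddCommGroup G] [NormedSpace ℝ G]
    (hμ : IsIsometryInvariant μ) (g : V ≃ₗᵢ[ℝ] V) (f : V → G) :
    ∫ x, f (g x) ∂μ = ∫ x, f x ∂μ :=
  MeasurePreserving.integral_comp' (f := g.toHomeomorph.toMeasurableEquiv)
    ⟨g.continuous.measurable, hμ g⟩ f

theorem integral_comp_inner_eq (hμ : IsIsometryInvariant μ) {v w : V} (hvw : ‖v‖ = ‖w‖)
    (φ : ℝ → ℝ) : ∫ x, φ ⟪v, x⟫ ∂μ = ∫ x, φ ⟪w, x⟫ ∂μ := by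
  set g := Submodule.reflection (ℝ ∙ (v - w))ᗮ
  have hg : g v = w := Submodule.reflection_sub hvw
  calc ∫ x, φ ⟪v, x⟫ ∂μ = ∫ x, φ ⟪w, g x⟫ ∂μ := by
        simp only [← hg, LinearIsometryEquiv.inner_map_map]
    _ = ∫ x, φ ⟪w, x⟫ ∂μ := hμ.integral_comp g (fun x ↦ φ ⟪w, x⟫)

end Measure.IsIsometryInvariant

variable [FiniteDimensional ℝ V] {μ : Measure V}

theorem integrable_of_ae_norm_eq_one [IsFiniteMeasure μ] (hμ : ∀ᵐ x ∂μ, ‖x‖ = 1) {f : V → ℝ}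
    (hf : Continuous f) : Integrable f μ := by
  have hrestrict : μ.restrict (Metric.sphere 0 1) = μ :=
    Measure.restrict_eq_self_of_ae_mem (by simpa only [mem_sphere_zero_iff_norm] using hμ)
  rw [← hrestrict]
  exact hf.continuousOn.integrableOn_compact (isCompact_sphere 0 1)

variable [IsProbabilityMeasure μ]

theorem finrank_mul_integral_inner_sq (hinv : μ.IsIsometryInvariant)
    (hμ : ∀ᵐ x ∂μ, ‖x‖ = 1) (v : V) : finrank ℝ V * ∫ x, ⟪v, x⟫ ^ 2 ∂μ = ‖v‖ ^ 2 := by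
  let b := stdOrthonormalBasis ℝ V
  have hint : ∀ i, Integrable (fun x ↦ ⟪b i, x⟫ ^ 2) μ := fun i ↦
    integrable_of_ae_norm_eq_one hμ ((continuous_const.inner continuous_id).pow 2)
  have hbasis : ∀ i, ∫ x, ⟪v, x⟫ ^ 2 ∂μ = ‖v‖ ^ 2 * ∫ x, ⟪b i, x⟫ ^ 2 ∂μ := fun i ↦ by
    have h := hinv.integral_comp_inner_eq (v := v) (w := ‖v‖ • b i) (by simp [norm_smul]) (· ^ 2)
    simpa [real_inner_smul_left, mul_pow, integral_const_mul] using h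
  have hsum : ∫ x, ∑ i, ⟪b i, x⟫ ^ 2 ∂μ = 1 := by
    rw [integral_congr_ae (g := fun _ ↦ (1 : ℝ))]
    · simp
    filter_upwards [hμ] with x hx
    simpa [hx] using b.sum_sq_norm_inner_right x
  calc finrank ℝ V * ∫ x, ⟪v, x⟫ ^ 2 ∂μ = ∑ i, ‖v‖ ^ 2 * ∫ x, ⟪b i, x⟫ ^ 2 ∂μ := by
        rw [Finset.sum_congr rfl fun i _ ↦ (hbasis i).symm]
        simp
    _ = ‖v‖ ^ 2 := by
        rw [← Finset.mul_sum, ← integral_finsetSum _ fun i _ ↦ hint i, hsum, mul_one]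

theorem norm_le_finrank_mul_integral_abs_inner (hinv : μ.IsIsometryInvariant)
    (hμ : ∀ᵐ x ∂μ, ‖x‖ = 1) (v : V) : ‖v‖ ≤ finrank ℝ V * ∫ x, |⟪v, x⟫| ∂μ := by
  rcases eq_or_ne v 0 with rfl | hv
  · simp
  have hpt : ∀ᵐ x ∂μ, ⟪v, x⟫ ^ 2 ≤ ‖v‖ * |⟪v, x⟫| := by
    filter_upwards [hμ] with x hx
    calc ⟪v, x⟫ ^ 2 = |⟪v, x⟫| * |⟪v, x⟫| := by rw [abs_mul_abs_self, sq]
      _ ≤ ‖v‖ * |⟪v, x⟫| := by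
        gcongr
        simpa [hx] using abs_real_inner_le_norm v x
  have hmono : ∫ x, ⟪v, x⟫ ^ 2 ∂μ ≤ ‖v‖ * ∫ x, |⟪v, x⟫| ∂μ := by
    rw [← integral_const_mul]
    refine integral_mono_ae ?_ ?_ hpt <;> apply integrable_of_ae_norm_eq_one hμ <;> fun_prop
  have hsq : ‖v‖ * ‖v‖ ≤ ‖v‖ * (finrank ℝ V * ∫ x, |⟪v, x⟫| ∂μ) := by
    rw [← sq, ← finrank_mul_integral_inner_sq hinv hμ v, mul_left_comm]
    gcongr
  exact le_of_mul_le_mul_left hsq (norm_pos_iff.mpr hv)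

theorem opNorm_le_finrank_mul_integral_norm_apply {W : Type*} [NormedAddCommGroup W]
    [InnerProductSpace ℝ W] [CompleteSpace W] (hinv : μ.IsIsometryInvariant)
    (hμ : ∀ᵐ x ∂μ, ‖x‖ = 1) (A : V →L[ℝ] W) : ‖A‖ ≤ finrank ℝ V * ∫ x, ‖A x‖ ∂μ := by
  rw [← ContinuousLinearMap.adjoint.norm_map A]
  refine ContinuousLinearMap.opNorm_le_bound _ (by positivity) fun u ↦ ?_
  have hint : Integrable (fun x ↦ ‖u‖ * ‖A x‖) μ :=
    integrable_of_ae_norm_eq_one hμ (by fun_prop)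
  calc ‖A.adjoint u‖ ≤ finrank ℝ V * ∫ x, |⟪A.adjoint u, x⟫| ∂μ :=
        norm_le_finrank_mul_integral_abs_inner hinv hμ _
    _ ≤ finrank ℝ V * ∫ x, ‖u‖ * ‖A x‖ ∂μ := by
        refine mul_le_mul_of_nonneg_left (integral_mono ?_ hint fun x ↦ ?_) (by positivity)
        · exact integrable_of_ae_norm_eq_one hμ (by fun_prop)
        · rw [ContinuousLinearMap.adjoint_inner_left]
          exact abs_real_inner_le_norm u (A x)
    _ = finrank ℝ V * (∫ x, ‖A x‖ ∂μ) * ‖u‖ := by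
        rw [integral_const_mul]
        ring

end MeasureTheory

open MeasureTheory

/-- the worst-case condition of a linear map is at most `m` times its
stochastic condition: if `E` is uniformly distributed on the unit sphere `S^{m-1} ⊂ ℝ^m`
(uniformity being characterised by invariance under all linear isometries), then
`(1/m)‖A‖ ≤ 𝔼[‖A E‖₂]`. -/
theorem worst_case_le_m_times_stochastic
    {m n : ℕ} (hm : 1 ≤ m)
    (A : EuclideanSpace ℝ (Fin m) →L[ℝ] EuclideanSpace ℝ (Fin n))
    {Ω : Type} [MeasurableSpace Ω] (ℙ : Measure Ω) [IsProbabilityMeasure ℙ]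
    (E : Ω → EuclideanSpace ℝ (Fin m)) (hmeas : Measurable E)
    (hsphere : ∀ ω, ‖E ω‖ = 1)
    (hinv : ∀ g : EuclideanSpace ℝ (Fin m) ≃ₗᵢ[ℝ] EuclideanSpace ℝ (Fin m),
      Measure.map (fun ω => g (E ω)) ℙ = Measure.map E ℙ) :
    (1 / (m : ℝ)) * ‖A‖ ≤ ∫ ω, ‖A (E ω)‖ ∂ℙ := by
  have := Measure.isProbabilityMeasure_map (μ := ℙ) hmeas.aemeasurable
  have hlaw_inv : (ℙ.map E).IsIsometryInvariant := fun g ↦ by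
    rw [Measure.map_map g.continuous.measurable hmeas]
    exact hinv g
  have hlaw_sphere : ∀ᵐ x ∂ℙ.map E, ‖x‖ = 1 :=
    (ae_map_iff hmeas.aemeasurable (measurableSet_eq_fun measurable_norm measurable_const)).2
      (.of_forall hsphere)
  have hbound := opNorm_le_finrank_mul_integral_norm_apply hlaw_inv hlaw_sphere A
  rw [finrank_euclideanSpace_fin,
    integral_map hmeas.aemeasurable (by fun_prop : Continuous fun x ↦ ‖A x‖).aestronglyMeasurable]
    at hbound
  rw [one_div_mul_eq_div, div_le_iff₀ (by exact_mod_cast hm)]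
  linarith
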